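/- arXiv:1003.2290 — 3 statements merged into one kernel-verified Lean document; each statement's English description precedes it below -/
import Mathlib

section
/- If y : [0, π] → ℝ is continuously differentiable and y(0) = y(π) = 0, then ∫₀^π y(t)² dt ≤ ∫₀^π y'(t)² dt. -/
open Real intervalIntegral MeasureTheory Set Filter Topology

/-!
If `w' + w² = -c²` on `[0, π]`, then `(y' - w y)² = y'² - c² y² - (w y²)'`, and integrating
(the boundary term vanishes with `y`) gives `c² ∫ y² ≤ ∫ y'²`. The Riccati solution
`w = -c tan (c (t - π/2))` is regular on `[0, π]` exactly when `|c| < 1`, so one lets `c → 1`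
instead of working with the singular `w = cot` of the classical argument.
-/

theorem integral_neg_riccati_mul_sq_le_integral_sq_deriv {a b : ℝ} (hab : a ≤ b)
    {y y' w w' : ℝ → ℝ} (hy : ContinuousOn y (Icc a b)) (hy' : ContinuousOn y' (Icc a b))
    (hyd : ∀ t ∈ Ioo a b, HasDerivAt y (y' t) t) (hw : ContinuousOn w (Icc a b))
    (hw' : ContinuousOn w' (Icc a b)) (hwd : ∀ t ∈ Ioo a b, HasDerivAt w (w' t) t)
    (ha : y a = 0) (hb : y b = 0) :
    ∫ t in a..b, -(w' t + w t ^ 2) * y t ^ 2 ≤ ∫ t in a..b, y' t ^ 2 := by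
  have hint : ∀ {g : ℝ → ℝ}, ContinuousOn g (Icc a b) → IntervalIntegrable g volume a b :=
    fun hg => (uIcc_of_le hab ▸ hg).intervalIntegrable
  have hboundary : ∫ t in a..b, (w' t * y t ^ 2 + w t * (2 * y t * y' t)) = 0 := by
    have hderiv : ∀ t ∈ Ioo a b, HasDerivAt (fun s => w s * y s ^ 2)
        (w' t * y t ^ 2 + w t * (2 * y t * y' t)) t := fun t ht =>
      (hwd t ht).mul ((hyd t ht).pow 2 |>.congr_deriv (by ring))
    rw [integral_eq_sub_of_hasDerivAt_of_le hab (hw.mul (hy.pow 2)) hderiv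
      (hint (by fun_prop))]
    simp [ha, hb]
  have hsquare : 0 ≤ ∫ t in a..b, (y' t - w t * y t) ^ 2 :=
    integral_nonneg hab fun t _ => sq_nonneg _
  have hsplit : ∫ t in a..b, (y' t - w t * y t) ^ 2 = (∫ t in a..b, y' t ^ 2) -
      (∫ t in a..b, -(w' t + w t ^ 2) * y t ^ 2) -
      ∫ t in a..b, (w' t * y t ^ 2 + w t * (2 * y t * y' t)) := by
    rw [← integral_sub (hint (by fun_prop)) (hint (by fun_prop)),
      ← integral_sub (hint (by fun_prop)) (hint (by fun_prop))]
    congr 1 with t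
    ring
  linarith

theorem hasDerivAt_neg_mul_tan_mul_sub {c t : ℝ} (h : cos (c * (t - π / 2)) ≠ 0) :
    HasDerivAt (fun s => -c * tan (c * (s - π / 2))) (-c ^ 2 / cos (c * (t - π / 2)) ^ 2) t :=
  (((hasDerivAt_tan h).comp t (((hasDerivAt_id t).sub_const (π / 2)).const_mul c)).const_mul
    (-c)).congr_deriv (by ring)

theorem neg_div_cos_sq_add_neg_mul_tan_sq {c s : ℝ} (h : cos s ≠ 0) :
    -(-c ^ 2 / cos s ^ 2 + (-c * tan s) ^ 2) = c ^ 2 := by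
  rw [← inv_one_add_tan_sq h]
  field_simp
  ring

theorem cos_mul_sub_pi_div_two_pos {c t : ℝ} (hc : |c| < 1) (ht : t ∈ Icc 0 π) :
    0 < cos (c * (t - π / 2)) := by
  have h : |c * (t - π / 2)| < π / 2 :=
    calc |c * (t - π / 2)| = |c| * |t - π / 2| := abs_mul _ _
      _ ≤ |c| * (π / 2) := by
        gcongr
        exact abs_le.mpr ⟨by linarith [ht.1], by linarith [ht.2]⟩
      _ < π / 2 := by nlinarith [pi_pos]
  exact cos_pos_of_mem_Ioo (abs_lt.mp h)

theorem sq_mul_integral_sq_le_integral_sq_deriv {y y' : ℝ → ℝ} (hy : ContinuousOn y (Icc 0 π))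
    (hy' : ContinuousOn y' (Icc 0 π)) (hyd : ∀ t ∈ Ioo 0 π, HasDerivAt y (y' t) t)
    (h0 : y 0 = 0) (hπ : y π = 0) {c : ℝ} (hc : |c| < 1) :
    c ^ 2 * ∫ t in (0 : ℝ)..π, y t ^ 2 ≤ ∫ t in (0 : ℝ)..π, y' t ^ 2 := by
  have hcos t (ht : t ∈ Icc 0 π) : cos (c * (t - π / 2)) ≠ 0 :=
    (cos_mul_sub_pi_div_two_pos hc ht).ne'
  have hwd t (ht : t ∈ Icc 0 π) := hasDerivAt_neg_mul_tan_mul_sub (hcos t ht)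
  have hriccati : ∀ t ∈ uIcc 0 π, -(-c ^ 2 / cos (c * (t - π / 2)) ^ 2 +
      (-c * tan (c * (t - π / 2))) ^ 2) * y t ^ 2 = c ^ 2 * y t ^ 2 := by
    intro t ht
    rw [neg_div_cos_sq_add_neg_mul_tan_sq (hcos t (uIcc_of_le pi_pos.le ▸ ht))]
  rw [← intervalIntegral.integral_const_mul, ← integral_congr hriccati]
  refine integral_neg_riccati_mul_sq_le_integral_sq_deriv pi_pos.le hy hy' hyd
    (fun t ht => (hwd t ht).continuousAt.continuousWithinAt)
    (ContinuousOn.div (by fun_prop) (by fun_prop) fun t ht => pow_ne_zero 2 (hcos t ht))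
    (fun t ht => hwd t (Ioo_subset_Icc_self ht)) h0 hπ

theorem integral_sq_le_integral_sq_deriv {y y' : ℝ → ℝ} (hy : ContinuousOn y (Icc 0 π))
    (hy' : ContinuousOn y' (Icc 0 π)) (hyd : ∀ t ∈ Ioo 0 π, HasDerivAt y (y' t) t)
    (h0 : y 0 = 0) (hπ : y π = 0) :
    ∫ t in (0 : ℝ)..π, y t ^ 2 ≤ ∫ t in (0 : ℝ)..π, y' t ^ 2 := by
  have hlim : Tendsto (fun c : ℝ => c ^ 2 * ∫ t in (0 : ℝ)..π, y t ^ 2) (𝓝[<] 1)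
      (𝓝 (∫ t in (0 : ℝ)..π, y t ^ 2)) := by
    refine tendsto_nhdsWithin_of_tendsto_nhds ?_
    exact (by fun_prop : Continuous fun c : ℝ => c ^ 2 * ∫ t in (0 : ℝ)..π, y t ^ 2).tendsto' 1 _
      (by simp)
  refine le_of_tendsto hlim ?_
  filter_upwards [Ioo_mem_nhdsLT (show (0 : ℝ) < 1 from one_pos)] with c hc
  exact sq_mul_integral_sq_le_integral_sq_deriv hy hy' hyd h0 hπ
    (abs_lt.mpr ⟨by linarith [hc.1], hc.2⟩)

/-- Wirtinger's inequality: if `y` is continuously differentiable on `[0, π]`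
and vanishes at the endpoints, then `∫₀^π y² ≤ ∫₀^π y'²`. -/
theorem wirtinger_basic (y : ℝ → ℝ)
    (hy : ContDiffOn ℝ 1 y (Set.Icc 0 π))
    (h0 : y 0 = 0) (hπ : y π = 0) :
    ∫ t in (0:ℝ)..π, (y t) ^ 2 ≤ ∫ t in (0:ℝ)..π, (derivWithin y (Set.Icc 0 π) t) ^ 2 := by
  refine integral_sq_le_integral_sq_deriv hy.continuousOn
    (hy.continuousOn_derivWithin (uniqueDiffOn_Icc pi_pos) le_rfl) (fun t ht => ?_) h0 hπ
  exact ((hy.differentiableOn one_ne_zero) t (Ioo_subset_Icc_self ht)).hasDerivWithinAt.hasDerivAt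
    (Icc_mem_nhds ht.1 ht.2)
end

section
/- Let χ be an even primitive Dirichlet character modulo q with q > 1, let ξ(s,χ) = (q/π)^{s/2} Γ(s/2) L(s,χ), K(χ) = q^{1/2}/G(1,χ), and U(s,χ) = K(χ)^{1/2} ξ(s,χ) (for a fixed choice of square root). Then U(s,χ) = conj(U(conj(s), χ̄)) for all s in the domain of analyticity. -/
/-!
Conjugating the Dirichlet series gives `L(s, χ⁻¹) = conj L(conj s, χ)` for `re s > 1`, hence
everywhere by analytic continuation (`χ` is nontrivial, being primitive of modulus `q > 1`). The
factors `(q/π)^{s/2}` and `Γ(s/2)` commute with conjugation in the same way, so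
`ξ(s, χ⁻¹) = conj ξ(conj s, χ)`. For even `χ` the Gauss sums satisfy `conj G(1, χ⁻¹) = G(1, χ)`,
so `conj k'` is a square root of `K(χ)`, i.e. `conj k' = ± k`; the sign `-` is impossible since it
would turn `conj k · conj k' = 1` into `-|k|² = 1`.
-/

open Complex ComplexConjugate

lemma ZMod.sum_range_natCast {M : Type*} [AddCommMonoid M] (q : ℕ) [NeZero q]
    (f : ZMod q → M) : ∑ l ∈ Finset.range q, f l = ∑ a : ZMod q, f a :=
  Finset.sum_nbij' (fun l ↦ (l : ZMod q)) ZMod.val (by simp) (by simp [ZMod.val_lt])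
    (fun _ hl ↦ ZMod.val_natCast_of_lt (Finset.mem_range.mp hl))
    (fun a _ ↦ ZMod.natCast_zmod_val a) (fun _ _ ↦ rfl)

lemma Complex.conj_ofReal_cpow_conj {x : ℝ} (hx : 0 ≤ x) (s : ℂ) :
    conj ((x : ℂ) ^ conj s) = (x : ℂ) ^ s := by
  have harg : (x : ℂ).arg ≠ Real.pi := by
    rw [arg_ofReal_of_nonneg hx]
    exact Real.pi_ne_zero.symm
  rw [cpow_conj _ _ harg, conj_ofReal, conj_conj]

lemma Complex.conj_eq_of_conj_sq_eq_of_mul_eq_one {k k' : ℂ} (hsq : conj (k' ^ 2) = k ^ 2)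
    (hkk' : k * k' = 1) : conj k' = k := by
  have hfac : (conj k' - k) * (conj k' + k) = 0 := by
    rw [map_pow] at hsq
    linear_combination hsq
  rcases mul_eq_zero.mp hfac with h | h
  · exact sub_eq_zero.mp h
  · have hconj := congrArg conj hkk'
    rw [map_mul, map_one, eq_neg_of_add_eq_zero_left h] at hconj
    have hnormSq : (normSq k : ℂ) = -1 := by
      rw [normSq_eq_conj_mul_self]
      linear_combination -hconj
    have : normSq k = -1 := by exact_mod_cast hnormSq
    linarith [normSq_nonneg k]

lemma LSeries_conj (f : ℕ → ℂ) (s : ℂ) :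
    LSeries (fun n ↦ conj (f n)) s = conj (LSeries f (conj s)) := by
  rw [LSeries, LSeries, starRingEnd_apply, tsum_star]
  refine tsum_congr fun n ↦ ?_
  rcases eq_or_ne n 0 with rfl | hn
  · simp
  · rw [LSeries.term_of_ne_zero hn, LSeries.term_of_ne_zero hn, ← starRingEnd_apply, map_div₀,
      ← ofReal_natCast, conj_ofReal_cpow_conj n.cast_nonneg]

namespace DirichletCharacter

lemma eq_inv_of_apply_eq_conj {q : ℕ} {χ χ' : DirichletCharacter ℂ q}
    (h : ∀ a, χ' a = conj (χ a)) : χ' = χ⁻¹ := by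
  ext a
  rw [h, starRingEnd_apply, MulChar.star_apply']

variable {q : ℕ} [NeZero q]

lemma ne_one_of_isPrimitive {R : Type*} [CommMonoidWithZero R] (hq : 1 < q)
    {χ : DirichletCharacter R q} (hχ : χ.IsPrimitive) : χ ≠ 1 := by
  rintro rfl
  rw [isPrimitive_def, conductor_one] at hχ
  omega

lemma LFunction_inv {χ : DirichletCharacter ℂ q} (hχ : χ ≠ 1) (s : ℂ) :
    χ⁻¹.LFunction s = conj (χ.LFunction (conj s)) := by
  have hleft : AnalyticOnNhd ℂ χ⁻¹.LFunction Set.univ :=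
    analyticOnNhd_univ_iff_differentiable.mpr (differentiable_LFunction (inv_ne_one.mpr hχ))
  have hright : AnalyticOnNhd ℂ (fun s ↦ conj (χ.LFunction (conj s))) Set.univ :=
    analyticOnNhd_univ_iff_differentiable.mpr fun z ↦
      differentiableAt_conj_conj_iff.mpr (differentiable_LFunction hχ _)
  refine congrFun (hleft.eq_of_eventuallyEq hright (z₀ := 2) ?_) s
  filter_upwards [(isOpen_lt continuous_const continuous_re).mem_nhds
    (show (1 : ℝ) < (2 : ℂ).re by norm_num)] with s (hs : 1 < s.re)
  rw [LFunction_eq_LSeries _ hs, LFunction_eq_LSeries _ (by simpa using hs), ← LSeries_conj]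
  simp only [← MulChar.star_apply', starRingEnd_apply]

lemma sum_range_mul_exp_eq_gaussSum (χ : DirichletCharacter ℂ q) :
    ∑ l ∈ Finset.range q, χ l * exp (2 * Real.pi * I * l / q) = gaussSum χ ZMod.stdAddChar := by
  rw [gaussSum, ← ZMod.sum_range_natCast]
  refine Finset.sum_congr rfl fun l _ ↦ ?_
  rw [← Int.cast_natCast, ZMod.stdAddChar_coe]
  simp only [Int.cast_natCast]

lemma Even.star_gaussSum_inv {χ : DirichletCharacter ℂ q} (hχ : χ.Even)
    (ψ : AddChar (ZMod q) ℂ) : star (gaussSum χ⁻¹ ψ) = gaussSum χ ψ := by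
  rw [star_gaussSum_eq, inv_inv, AddChar.inv_mulShift]
  simpa [show χ (-1) = 1 from hχ] using gaussSum_mulShift χ ψ (-1)

/-- The paper's `ξ(s, χ)`; it is the completed `L`-function only when `χ` is even. -/
noncomputable def xi (χ : DirichletCharacter ℂ q) (s : ℂ) : ℂ :=
  ((q : ℂ) / Real.pi) ^ (s / 2) * Gamma (s / 2) * χ.LFunction s

lemma xi_inv {χ : DirichletCharacter ℂ q} (hχ : χ ≠ 1) (s : ℂ) :
    xi χ⁻¹ s = conj (xi χ (conj s)) := by
  have hbase : (q : ℂ) / Real.pi = ((q / Real.pi : ℝ) : ℂ) := by push_cast; ring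
  have hhalf : conj s / 2 = conj (s / 2) := by rw [map_div₀, map_ofNat]
  simp only [xi, map_mul, hhalf, hbase, conj_ofReal_cpow_conj (by positivity : 0 ≤ q / Real.pi),
    ← Gamma_conj, conj_conj, LFunction_inv hχ]

end DirichletCharacter

open DirichletCharacter in
/-- Reflection symmetry `U(s,χ) = conj (U(conj s, χ̄))` for the normalised completed
Dirichlet `L`-function `U(s,χ) = K(χ)^{1/2} ξ(s,χ)`, where
`ξ(s,χ) = (q/π)^{s/2} Γ(s/2) L(s,χ)`, `K(χ) = q^{1/2}/G(1,χ)`, and the square roots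
`k, k'` of `K(χ), K(χ̄)` are chosen consistently (`k·k' = 1`). -/
theorem U_conj_symm (q : ℕ) [NeZero q] (hq : 1 < q)
    (χ χ' : DirichletCharacter ℂ q)
    (hconj : ∀ a : ZMod q, χ' a = (starRingEnd ℂ) (χ a))
    (hprim : χ.IsPrimitive) (heven : χ.Even)
    (k k' : ℂ)
    (hk : k ^ 2 = Real.sqrt q /
      (∑ l ∈ Finset.range q, χ l * Complex.exp (2 * Real.pi * I * l / q)))
    (hk' : k' ^ 2 = Real.sqrt q /
      (∑ l ∈ Finset.range q, χ' l * Complex.exp (2 * Real.pi * I * l / q)))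
    (hkk' : k * k' = 1) :
    ∀ s : ℂ,
      k * (((q : ℂ) / Real.pi) ^ (s / 2) * Complex.Gamma (s / 2) * χ.LFunction s)
        = (starRingEnd ℂ)
          (k' * (((q : ℂ) / Real.pi) ^ ((starRingEnd ℂ) s / 2) *
            Complex.Gamma ((starRingEnd ℂ) s / 2) * χ'.LFunction ((starRingEnd ℂ) s))) := by
  obtain rfl := eq_inv_of_apply_eq_conj hconj
  rw [sum_range_mul_exp_eq_gaussSum] at hk hk'
  have hk'k : conj k' = k := by
    refine conj_eq_of_conj_sq_eq_of_mul_eq_one ?_ hkk'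
    rw [hk', map_div₀, conj_ofReal, starRingEnd_apply, heven.star_gaussSum_inv, hk]
  intro s
  change k * xi χ s = conj (k' * xi χ⁻¹ (conj s))
  rw [map_mul, hk'k, xi_inv (ne_one_of_isPrimitive hq hprim), conj_conj, conj_conj]
end

section
/- For p prime, ∫₀¹ |1 − e(θ)/√p|^{−6} dθ = (1 + 4/p + 1/p²)(1 − 1/p)^{−5}, where e(θ) = exp(2πiθ). -/
open Complex MeasureTheory
open scoped ComplexConjugate

/-!
With `z = e(θ)/√p`, the binomial series `(1 - z)⁻³ = ∑ C(n+2,2) zⁿ` gives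
`|1 - z|⁻⁶ = |∑ C(n+2,2) p^(-n/2) e(nθ)|²`, so by Parseval (orthogonality of the `e(nθ)` on
`[0,1]`) the integral is `∑ C(n+2,2)² p⁻ⁿ`. Since `C(n+2,2)² = C(n+4,4) + 4 C(n+3,4) + C(n+2,4)`,
this is a combination of three shifted binomial series, which sum to `(1 + 4x + x²)/(1 - x)⁵`
at `x = 1/p`.
-/

theorem Nat.add_two_choose_two_sq (n : ℕ) :
    (n + 2).choose 2 ^ 2 = (n + 4).choose 4 + 4 * (n + 3).choose 4 + (n + 2).choose 4 := by
  have key : ((n + 2).choose 2 ^ 2 : ℚ) =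
      (n + 4).choose 4 + 4 * (n + 3).choose 4 + (n + 2).choose 4 := by
    simp only [Nat.cast_choose_eq_descPochhammer_div, descPochhammer_succ_eval,
      descPochhammer_zero, Polynomial.eval_one]
    push_cast
    ring
  exact_mod_cast key

theorem hasSum_add_choose_mul_geometric {𝕜 : Type*} [NormedField 𝕜] [HasSummableGeomSeries 𝕜]
    {k j : ℕ} (hkj : k ≤ j) {r : 𝕜} (hr : ‖r‖ < 1) :
    HasSum (fun n ↦ ((n + k).choose j : 𝕜) * r ^ n) (r ^ (j - k) / (1 - r) ^ (j + 1)) := by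
  obtain ⟨d, rfl⟩ := Nat.exists_eq_add_of_le hkj
  rw [← hasSum_nat_add_iff' d]
  have hvanish : ∑ i ∈ Finset.range d, ((i + k).choose (k + d) : 𝕜) * r ^ i = 0 :=
    Finset.sum_eq_zero fun i hi ↦ by
      rw [Nat.choose_eq_zero_of_lt (by simp at hi; omega), Nat.cast_zero, zero_mul]
  rw [hvanish, sub_zero, Nat.add_sub_cancel_left, ← mul_one_div]
  refine ((hasSum_choose_mul_geometric_of_norm_lt_one (k + d) hr).mul_left (r ^ d)).congr_fun
    fun n ↦ ?_
  rw [show n + d + k = n + (k + d) by omega, pow_add]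
  ring

theorem hasSum_add_two_choose_two_sq_mul_geometric {𝕜 : Type*} [NormedField 𝕜]
    [HasSummableGeomSeries 𝕜] {r : 𝕜} (hr : ‖r‖ < 1) :
    HasSum (fun n ↦ ((n + 2).choose 2 : 𝕜) ^ 2 * r ^ n) ((1 + 4 * r + r ^ 2) / (1 - r) ^ 5) := by
  have h4 := hasSum_add_choose_mul_geometric (k := 4) (j := 4) le_rfl hr
  have h3 := hasSum_add_choose_mul_geometric (k := 3) (j := 4) (by norm_num) hr
  have h2 := hasSum_add_choose_mul_geometric (k := 2) (j := 4) (by norm_num) hr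
  rw [show (1 + 4 * r + r ^ 2) / (1 - r) ^ 5 =
      r ^ (4 - 4) / (1 - r) ^ (4 + 1) + 4 * (r ^ (4 - 3) / (1 - r) ^ (4 + 1)) +
        r ^ (4 - 2) / (1 - r) ^ (4 + 1) by ring]
  refine ((h4.add (h3.mul_left 4)).add h2).congr_fun fun n ↦ ?_
  have hcast := congrArg (Nat.cast : ℕ → 𝕜) (Nat.add_two_choose_two_sq n)
  push_cast at hcast
  rw [hcast]
  ring

theorem norm_exp_two_pi_I_mul (θ : ℝ) : ‖exp (2 * Real.pi * I * θ)‖ = 1 := by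
  rw [show 2 * Real.pi * I * θ = ((2 * Real.pi * θ : ℝ) : ℂ) * I by push_cast; ring]
  exact norm_exp_ofReal_mul_I _

theorem integral_exp_two_pi_I_int_mul (k : ℤ) :
    ∫ θ in (0:ℝ)..1, exp (2 * Real.pi * I * k * θ) = if k = 0 then 1 else 0 := by
  split_ifs with hk
  · simp [hk]
  · have hc : 2 * Real.pi * I * k ≠ 0 := by simp [Real.pi_ne_zero, I_ne_zero, hk]
    rw [integral_exp_mul_complex hc, ofReal_one, mul_one, mul_comm _ (k : ℂ),
      exp_int_mul_two_pi_mul_I]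
    simp

theorem integral_exp_two_pi_I_mul_pow_mul_conj_pow (m n : ℕ) :
    ∫ θ in (0:ℝ)..1, exp (2 * Real.pi * I * θ) ^ m * conj (exp (2 * Real.pi * I * θ)) ^ n =
      if m = n then 1 else 0 := by
  have hexp (θ : ℝ) : exp (2 * Real.pi * I * θ) ^ m * conj (exp (2 * Real.pi * I * θ)) ^ n =
      exp (2 * Real.pi * I * ((m - n : ℤ) : ℂ) * θ) := by
    rw [← exp_conj, ← exp_nat_mul, ← exp_nat_mul, ← exp_add]
    congr 1
    simp only [map_mul, map_ofNat, conj_ofReal, conj_I]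
    push_cast
    ring
  simp_rw [hexp, integral_exp_two_pi_I_int_mul, sub_eq_zero, Nat.cast_inj]

theorem hasSum_mul_conj_of_summable_norm {ι : Type*} {f : ι → ℂ} (hf : Summable fun i ↦ ‖f i‖) :
    HasSum (fun ij : ι × ι ↦ f ij.1 * conj (f ij.2)) ((‖∑' i, f i‖ ^ 2 : ℝ) : ℂ) := by
  have hconj : Summable fun i ↦ ‖conj (f i)‖ := by simpa only [RCLike.norm_conj] using hf
  have := hf.of_norm.hasSum.mul (hasSum_conj'.mpr hf.of_norm.hasSum)
    (summable_mul_of_summable_norm (f := f) (g := fun i ↦ conj (f i)) hf hconj)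
  rwa [mul_conj', ← ofReal_pow] at this

theorem integral_norm_tsum_mul_exp_pow_sq {a : ℕ → ℂ} (ha : Summable fun n ↦ ‖a n‖) :
    ∫ θ in (0:ℝ)..1, ‖∑' n, a n * exp (2 * Real.pi * I * θ) ^ n‖ ^ 2 = ∑' n, ‖a n‖ ^ 2 := by
  let F (mn : ℕ × ℕ) (θ : ℝ) : ℂ :=
    a mn.1 * exp (2 * Real.pi * I * θ) ^ mn.1 * conj (a mn.2 * exp (2 * Real.pi * I * θ) ^ mn.2)
  have hnorm (mn : ℕ × ℕ) (θ : ℝ) : ‖F mn θ‖ = ‖a mn.1‖ * ‖a mn.2‖ := by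
    simp [F, norm_exp_two_pi_I_mul]
  have hterm (mn : ℕ × ℕ) :
      ∫ θ in (0:ℝ)..1, F mn θ = if mn.1 = mn.2 then ((‖a mn.1‖ ^ 2 : ℝ) : ℂ) else 0 := by
    simp only [F, map_mul, map_pow, mul_mul_mul_comm _ _ (conj (a mn.2)),
      intervalIntegral.integral_const_mul, integral_exp_two_pi_I_mul_pow_mul_conj_pow]
    split_ifs with h
    · rw [h, mul_one, mul_conj', ofReal_pow]
    · rw [mul_zero]
  have hpt (θ : ℝ) : HasSum (fun mn ↦ F mn θ)
      ((‖∑' n, a n * exp (2 * Real.pi * I * θ) ^ n‖ ^ 2 : ℝ) : ℂ) :=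
    hasSum_mul_conj_of_summable_norm (f := fun n ↦ a n * exp (2 * Real.pi * I * θ) ^ n)
      (by simpa [norm_exp_two_pi_I_mul] using ha)
  have hsum : HasSum (fun mn ↦ ∫ θ in (0:ℝ)..1, F mn θ)
      (∫ θ in (0:ℝ)..1, ((‖∑' n, a n * exp (2 * Real.pi * I * θ) ^ n‖ ^ 2 : ℝ) : ℂ)) :=
    intervalIntegral.hasSum_integral_of_dominated_convergence
      (fun mn _ ↦ ‖a mn.1‖ * ‖a mn.2‖) (fun _ ↦ by fun_prop)
      (fun mn ↦ ae_of_all _ fun θ _ ↦ (hnorm mn θ).le)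
      (ae_of_all _ fun _ _ ↦ by simpa only [norm_mul] using ha.mul_norm ha)
      intervalIntegrable_const (ae_of_all _ fun θ _ ↦ hpt θ)
  simp only [hterm, intervalIntegral.integral_ofReal] at hsum
  have hdiag : HasSum (fun n ↦ ((‖a n‖ ^ 2 : ℝ) : ℂ))
      ((∫ θ in (0:ℝ)..1, ‖∑' n, a n * exp (2 * Real.pi * I * θ) ^ n‖ ^ 2 : ℝ) : ℂ) := by
    have := (Function.Injective.hasSum_iff (g := fun n : ℕ ↦ (n, n))
      (fun _ _ h ↦ (Prod.mk.inj h).1) fun mn hmn ↦ ?_).mpr hsum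
    · simpa only [Function.comp_def, if_pos] using this
    · exact if_neg fun h ↦ hmn ⟨mn.1, Prod.ext rfl h⟩
  exact (hasSum_ofReal.mp hdiag).tsum_eq.symm

theorem inv_norm_one_sub_pow_eq_norm_tsum_sq (k : ℕ) {z : ℂ} (hz : ‖z‖ < 1) :
    (‖1 - z‖ ^ (2 * (k + 1)))⁻¹ = ‖∑' n, ((n + k).choose k : ℂ) * z ^ n‖ ^ 2 := by
  rw [tsum_choose_mul_geometric_of_norm_lt_one k hz, norm_div, norm_one, norm_pow, div_pow,
    one_pow, ← pow_mul, mul_comm (k + 1), one_div]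

theorem integral_inv_norm_one_sub_mul_exp_pow (k : ℕ) {r : ℝ} (hr : |r| < 1) :
    ∫ θ in (0:ℝ)..1, (‖1 - r * exp (2 * Real.pi * I * θ)‖ ^ (2 * (k + 1)))⁻¹ =
      ∑' n, ((n + k).choose k : ℝ) ^ 2 * (r ^ 2) ^ n := by
  have hsummable : Summable fun n ↦ ‖((n + k).choose k * r ^ n : ℂ)‖ := by
    simpa using summable_choose_mul_geometric_of_norm_lt_one (R := ℝ) k (r := |r|) (by simpa)
  have hpt (θ : ℝ) : (‖1 - r * exp (2 * Real.pi * I * θ)‖ ^ (2 * (k + 1)))⁻¹ =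
      ‖∑' n, ((n + k).choose k * r ^ n : ℂ) * exp (2 * Real.pi * I * θ) ^ n‖ ^ 2 := by
    rw [inv_norm_one_sub_pow_eq_norm_tsum_sq k (by simpa [norm_exp_two_pi_I_mul] using hr)]
    simp_rw [mul_pow, mul_assoc]
  simp_rw [hpt, integral_norm_tsum_mul_exp_pow_sq hsummable]
  congr 1 with n
  rw [norm_mul, norm_pow, norm_natCast, norm_real, Real.norm_eq_abs, mul_pow, ← pow_mul,
    pow_mul', sq_abs]

/-- For `p` prime, `∫₀¹ |1 - e(θ)/√p|^{-6} dθ = (1 + 4/p + 1/p²)(1 - 1/p)^{-5}`. -/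
theorem integral_abs_pow_six (p : ℕ) (hp : p.Prime) :
    (∫ θ in (0:ℝ)..1,
        (‖(1 - Complex.exp (2 * Real.pi * I * θ) / Real.sqrt p : ℂ)‖ ^ 6)⁻¹)
      = (1 + 4 / (p : ℝ) + 1 / (p : ℝ) ^ 2) * ((1 - 1 / (p : ℝ)) ^ 5)⁻¹ := by
  have hp_inv : 1 / (p : ℝ) < 1 := (div_lt_one (mod_cast hp.pos)).mpr (mod_cast hp.one_lt)
  have hr2 : ((Real.sqrt p)⁻¹) ^ 2 = 1 / (p : ℝ) := by
    rw [inv_pow, Real.sq_sqrt (by positivity), one_div]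
  have hr : |(Real.sqrt p)⁻¹| < 1 := by rwa [← sq_lt_one_iff_abs_lt_one, hr2]
  have hint := integral_inv_norm_one_sub_mul_exp_pow 2 hr
  simp_rw [ofReal_inv, inv_mul_eq_div, hr2] at hint
  rw [hint, (hasSum_add_two_choose_two_sq_mul_geometric (r := 1 / (p : ℝ))
    (by rwa [Real.norm_of_nonneg (by positivity)])).tsum_eq]
  ring
end
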